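/- arXiv:1811.07798 — 4 statements merged into one kernel-verified Lean document; each statement's English description precedes it below -/
import Mathlib

section
/- Let Z be a measurable space with a reference measure μ and let M₁ and M₂ be subnormalized measures on Z (i.e. 0 < Mᵢ(Z) ≤ 1 for i = 1,2), both having densities with respect to μ. Set Z₁ = M₁(Z). Then D(M₁‖M₂) ≤ Z₁ · (D₂(M₁‖M₂) − log Z₁). -/
open MeasureTheory Filter
open scoped ENNReal

noncomputable section
open Classical in
/-- Base-2 Kullback-Leibler divergence `D(M₁‖M₂)` of two (subnormalized) measures given by
their densities `p`, `q` with respect to the reference measure `μ`: it is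
`∫ p log₂(p/q) dμ` if `μ(q = 0, p > 0) = 0` (and the integral exists), and `+∞` otherwise. -/
def klDiv2 {Z : Type*} [MeasurableSpace Z] (μ : Measure Z) (p q : Z → ℝ) : EReal :=
  if μ {z | q z = 0 ∧ 0 < p z} = 0 ∧ Integrable (fun z => p z * Real.logb 2 (p z / q z)) μ
  then ((∫ z, p z * Real.logb 2 (p z / q z) ∂μ : ℝ) : EReal) else ⊤

open Classical in
/-- Base-2 Rényi 2-divergence `D₂(M₁‖M₂)` of two (subnormalized) measures given by their
densities `p`, `q` with respect to `μ`: `log₂ ∫ p²/q dμ` if `μ(q = 0, p > 0) = 0` (and the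
integral is finite), and `+∞` otherwise. -/
def renyi2Div {Z : Type*} [MeasurableSpace Z] (μ : Measure Z) (p q : Z → ℝ) : EReal :=
  if μ {z | q z = 0 ∧ 0 < p z} = 0 ∧ Integrable (fun z => p z ^ 2 / q z) μ
  then ((Real.logb 2 (∫ z, p z ^ 2 / q z ∂μ) : ℝ) : EReal) else ⊤

/-- Conditional Kullback-Leibler divergence `D(W‖M|P) = ∑ₛ p(s) D(W(·|s)‖M)` of a
(subnormalized) channel with densities `w s` from a (subnormalized) measure with density
`q`, with respect to the distribution with density `p` on the finite set `S`. -/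
def condKL {S Z : Type*} [Fintype S] [MeasurableSpace Z] (μ : Measure Z)
    (p : S → ℝ) (w : S → Z → ℝ) (q : Z → ℝ) : EReal :=
  ∑ s : S, ((p s : ℝ) : EReal) * klDiv2 μ (w s) q

/-- Base-2 exponential function `EReal → ℝ≥0∞`. -/
def exp2 (x : EReal) : ℝ≥0∞ :=
  if x = ⊤ then ⊤ else if x = ⊥ then 0 else ENNReal.ofReal ((2 : ℝ) ^ x.toReal)

/-- Base-2 logarithm `ℝ≥0∞ → EReal`. -/
def log2E (x : ℝ≥0∞) : EReal :=
  if x = ⊤ then ⊤ else if x = 0 then ⊥ else ((Real.logb 2 x.toReal : ℝ) : EReal)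

/-- Conditional Rényi 2-divergence `D₂(W‖M|P) = log₂ ∑ₛ p(s) 2^{D₂(W(·|s)‖M)}`. -/
def condRenyi2 {S Z : Type*} [Fintype S] [MeasurableSpace Z] (μ : Measure Z)
    (p : S → ℝ) (w : S → Z → ℝ) (q : Z → ℝ) : EReal :=
  log2E (∑ s : S, ENNReal.ofReal (p s) * exp2 (renyi2Div μ (w s) q))

/-- Density (w.r.t. counting measure) of the uniform distribution on a finite set. -/
def unif (S : Type*) [Fintype S] : S → ℝ := fun _ => 1 / (Fintype.card S : ℝ)

/-- Density of the output measure `PW` of the channel with densities `w x` under the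
input distribution with density `p` on the finite set `X`. -/
def mixDensity {X Z : Type*} [Fintype X] (p : X → ℝ) (w : X → Z → ℝ) : Z → ℝ :=
  fun z => ∑ x : X, p x * w x z

/-- Density of the channel `Q_{f,m} W : S → Z`, i.e. of the concatenation of the
randomized inverse `Q_{f,m}` (with density `q_{f,m}(x|s) = (1/d_S)·1_{f(s,x)=m}`) with
the channel with densities `w x`. -/
def briChannelDensity {S X N Z : Type*} [Fintype X] [DecidableEq N]
    (f : S → X → N) (m : N) (dS : ℕ) (w : X → Z → ℝ) : S → Z → ℝ :=
  fun s z => ∑ x : X, (if f s x = m then (1 : ℝ) / dS else 0) * w x z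

/-- Density of the subnormalized channel `W_T`, obtained from the channel with densities
`w x` by restriction to a set `T ⊆ X × Z`: `w_T(z|x) = w(z|x)·1_{(x,z)∈T}`. -/
def restrictChan {X Z : Type*} (w : X → Z → ℝ) (T : Set (X × Z)) : X → Z → ℝ :=
  fun x => Set.indicator {z | (x, z) ∈ T} (w x)

/-- The `ε`-smooth conditional Rényi 2-divergence `D₂^ε(W‖P_X W|P_X)`: the infimum of
`D₂(W_T‖P_X W_T|P_X)` over all (sectionwise measurable) `T ⊆ X × Z` with
`W({z : (x,z) ∈ T}|x) ≥ 1 − ε` for all `x`. -/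
def smoothCondRenyi2 {X Z : Type*} [Fintype X] [MeasurableSpace Z] (μ : Measure Z)
    (w : X → Z → ℝ) (ε : ℝ) : EReal :=
  ⨅ T ∈ {T : Set (X × Z) | (∀ x : X, MeasurableSet {z | (x, z) ∈ T}) ∧
      ∀ x : X, 1 - ε ≤ ∫ z in {z | (x, z) ∈ T}, w x z ∂μ},
    condRenyi2 μ (unif X) (restrictChan w T) (mixDensity (unif X) (restrictChan w T))

lemma aux_g_int {Z : Type*} [MeasurableSpace Z] (μ : Measure Z) (m₁ m₂ : Z → ℝ)
    (hm₁ : Measurable m₁) (hm₂ : Measurable m₂)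
    (hm₁0 : ∀ z, 0 ≤ m₁ z) (hm₂0 : ∀ z, 0 ≤ m₂ z)
    (hm₁int : Integrable m₁ μ) (hm₂int : Integrable m₂ μ)
    (hae : ∀ᵐ z ∂μ, ¬(m₂ z = 0 ∧ 0 < m₁ z))
    (hR : Integrable (fun z => m₁ z ^ 2 / m₂ z) μ) :
    Integrable (fun z => m₁ z * Real.log (m₁ z / m₂ z)) μ := by
  apply Integrable.mono' ((hR.add hm₁int).add hm₂int)
  · exact (hm₁.mul ((hm₁.div hm₂).log)).aestronglyMeasurable
  · filter_upwards [hae] with z h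
    simp only [Pi.add_apply]
    rcases (hm₁0 z).eq_or_lt with h1 | h1
    · simp only [← h1, zero_mul, norm_zero]
      simpa using hm₂0 z
    · have h2 : 0 < m₂ z := lt_of_le_of_ne (hm₂0 z) (fun e => h ⟨e.symm, h1⟩)
      rw [Real.norm_eq_abs, abs_le]
      have hu : Real.log (m₁ z / m₂ z) ≤ m₁ z / m₂ z - 1 :=
        Real.log_le_sub_one_of_pos (by positivity)
      have hl : Real.log (m₂ z / m₁ z) ≤ m₂ z / m₁ z - 1 :=
        Real.log_le_sub_one_of_pos (by positivity)
      have hneg : Real.log (m₂ z / m₁ z) = -Real.log (m₁ z / m₂ z) := by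
        rw [← Real.log_inv, inv_div]
      rw [hneg] at hl
      have hid : m₁ z * (m₁ z / m₂ z) = m₁ z ^ 2 / m₂ z := by ring
      have hid2 : m₁ z * (m₂ z / m₁ z) = m₂ z := by field_simp
      constructor
      · have := mul_le_mul_of_nonneg_left hl (hm₁0 z)
        rw [mul_sub, hid2] at this
        have h3 : 0 ≤ m₁ z ^ 2 / m₂ z := by positivity
        nlinarith [hm₁0 z, hm₂0 z]
      · have := mul_le_mul_of_nonneg_left hu (hm₁0 z)
        rw [mul_sub, hid] at this
        nlinarith [hm₁0 z, hm₂0 z]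

/-- For subnormalized measures `M₁`, `M₂` on `Z` with `μ`-densities
`m₁`, `m₂` and `Z₁ = M₁(Z)`, one has `D(M₁‖M₂) ≤ Z₁ · (D₂(M₁‖M₂) − log₂ Z₁)`. -/
theorem stmt_0 {Z : Type*} [MeasurableSpace Z] (μ : Measure Z) (m₁ m₂ : Z → ℝ)
    (hm₁ : Measurable m₁) (hm₂ : Measurable m₂)
    (hm₁0 : ∀ z, 0 ≤ m₁ z) (hm₂0 : ∀ z, 0 ≤ m₂ z)
    (hm₁int : Integrable m₁ μ) (hm₂int : Integrable m₂ μ)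
    (hZ₁pos : 0 < ∫ z, m₁ z ∂μ) (hZ₁le : (∫ z, m₁ z ∂μ) ≤ 1)
    (hZ₂pos : 0 < ∫ z, m₂ z ∂μ) (hZ₂le : (∫ z, m₂ z ∂μ) ≤ 1) :
    klDiv2 μ m₁ m₂ ≤ ((∫ z, m₁ z ∂μ : ℝ) : EReal) *
      (renyi2Div μ m₁ m₂ - ((Real.logb 2 (∫ z, m₁ z ∂μ) : ℝ) : EReal)) := by
  set Z₁ := ∫ z, m₁ z ∂μ with hZ₁def
  by_cases hcond : μ {z | m₂ z = 0 ∧ 0 < m₁ z} = 0 ∧ Integrable (fun z => m₁ z ^ 2 / m₂ z) μ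
  swap
  · rw [renyi2Div, if_neg hcond, EReal.top_sub_coe, EReal.coe_mul_top_of_pos hZ₁pos]
    exact le_top
  obtain ⟨hnull, hR⟩ := hcond
  have hae : ∀ᵐ z ∂μ, ¬(m₂ z = 0 ∧ 0 < m₁ z) := by
    rw [ae_iff]; simpa [not_not] using hnull
  have hgint : Integrable (fun z => m₁ z * Real.log (m₁ z / m₂ z)) μ :=
    aux_g_int μ m₁ m₂ hm₁ hm₂ hm₁0 hm₂0 hm₁int hm₂int hae hR
  have hfint : Integrable (fun z => m₁ z * Real.logb 2 (m₁ z / m₂ z)) μ := by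
    simpa [Real.logb, mul_div_assoc] using hgint.div_const (Real.log 2)
  set R := ∫ z, m₁ z ^ 2 / m₂ z ∂μ with hRdef
  have hRnn : 0 ≤ R := integral_nonneg fun z => by have := hm₂0 z; positivity
  have hRpos : 0 < R := by
    rcases hRnn.eq_or_lt with h0 | h0
    · exfalso
      have hzero : (fun z => m₁ z ^ 2 / m₂ z) =ᵐ[μ] 0 :=
        (integral_eq_zero_iff_of_nonneg (fun z => by have := hm₂0 z; positivity) hR).1 h0.symm
      have hm0 : m₁ =ᵐ[μ] 0 := by
        filter_upwards [hzero, hae] with z hz h2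
        by_contra hne
        have h1 : 0 < m₁ z := lt_of_le_of_ne (hm₁0 z) (Ne.symm hne)
        have h2' : m₂ z ≠ 0 := fun hh => h2 ⟨hh, h1⟩
        have hz' : m₁ z ^ 2 / m₂ z = 0 := hz
        rcases div_eq_zero_iff.1 hz' with h | h
        · exact hne (pow_eq_zero_iff (n := 2) (by norm_num) |>.1 h)
        · exact h2' h
      have : Z₁ = 0 := by
        rw [hZ₁def, integral_congr_ae hm0]
        simp
      linarith
    · exact h0
  -- pointwise inequality
  have hpt : ∀ᵐ z ∂μ, m₁ z * Real.log (m₁ z / m₂ z) ≤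
      Z₁ / R * (m₁ z ^ 2 / m₂ z) - m₁ z + (Real.log R - Real.log Z₁) * m₁ z := by
    filter_upwards [hae] with z h
    rcases (hm₁0 z).eq_or_lt with h1 | h1
    · simp [← h1]
    · have h2 : 0 < m₂ z := lt_of_le_of_ne (hm₂0 z) fun e => h ⟨e.symm, h1⟩
      have hx : 0 < m₁ z / m₂ z * (Z₁ / R) := by positivity
      have hlog := Real.log_le_sub_one_of_pos hx
      rw [Real.log_mul (by positivity) (by positivity),
        Real.log_div hZ₁pos.ne' hRpos.ne'] at hlog
      have key : Real.log (m₁ z / m₂ z) ≤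
          m₁ z / m₂ z * (Z₁ / R) - 1 + (Real.log R - Real.log Z₁) := by linarith
      calc m₁ z * Real.log (m₁ z / m₂ z)
          ≤ m₁ z * (m₁ z / m₂ z * (Z₁ / R) - 1 + (Real.log R - Real.log Z₁)) :=
            mul_le_mul_of_nonneg_left key (hm₁0 z)
        _ = Z₁ / R * (m₁ z ^ 2 / m₂ z) - m₁ z + (Real.log R - Real.log Z₁) * m₁ z := by
            ring
  have hRHSint : Integrable (fun z => Z₁ / R * (m₁ z ^ 2 / m₂ z) - m₁ z
      + (Real.log R - Real.log Z₁) * m₁ z) μ :=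
    ((hR.const_mul _).sub hm₁int).add (hm₁int.const_mul _)
  have hint := integral_mono_ae hgint hRHSint hpt
  have hRHSval : ∫ z, (Z₁ / R * (m₁ z ^ 2 / m₂ z) - m₁ z
      + (Real.log R - Real.log Z₁) * m₁ z) ∂μ = Z₁ * (Real.log R - Real.log Z₁) := by
    have hA : Integrable (fun z => Z₁ / R * (m₁ z ^ 2 / m₂ z)) μ := hR.const_mul _
    have hB : Integrable (fun z => (Real.log R - Real.log Z₁) * m₁ z) μ := hm₁int.const_mul _
    have hAB : Integrable (fun z => Z₁ / R * (m₁ z ^ 2 / m₂ z) - m₁ z) μ := hA.sub hm₁int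
    rw [integral_add hAB hB, integral_sub hA hm₁int, integral_const_mul, integral_const_mul,
      ← hRdef, ← hZ₁def, div_mul_cancel₀ _ hRpos.ne']
    ring
  rw [hRHSval] at hint
  -- conclude in ℝ
  have hlog2 : (0:ℝ) < Real.log 2 := Real.log_pos one_lt_two
  have hreal : ∫ z, m₁ z * Real.logb 2 (m₁ z / m₂ z) ∂μ ≤
      Z₁ * (Real.logb 2 R - Real.logb 2 Z₁) := by
    have heq : ∫ z, m₁ z * Real.logb 2 (m₁ z / m₂ z) ∂μ =
        (∫ z, m₁ z * Real.log (m₁ z / m₂ z) ∂μ) / Real.log 2 := by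
      rw [← integral_div]
      congr 1 with z
      rw [Real.logb, mul_div_assoc]
    rw [heq, Real.logb, Real.logb, div_le_iff₀ hlog2]
    calc (∫ z, m₁ z * Real.log (m₁ z / m₂ z) ∂μ) ≤ Z₁ * (Real.log R - Real.log Z₁) := hint
      _ = Z₁ * (Real.log R / Real.log 2 - Real.log Z₁ / Real.log 2) * Real.log 2 := by
          field_simp
  rw [klDiv2, if_pos ⟨hnull, hfint⟩, renyi2Div, if_pos ⟨hnull, hR⟩,
    ← EReal.coe_sub, ← EReal.coe_mul, EReal.coe_le_coe_iff]
  exact hreal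


end
end

section
/- Let f : S × X → N be a biregular irreducible function with regularity set M and degrees (d_S, d_X), let W : X → Z be a channel with densities with respect to a reference measure μ, and let T ⊆ X × Z be a measurable set such that W_T(Z|x) > 0 for all x ∈ X. Then for every m ∈ M: 2^{D₂(Q_{f,m}W_T ‖ P_X W_T | P_S)} ≤ 1 + λ₂(f,m) · 2^{D₂(W_T ‖ P_X W_T | P_X)}. -/
/-!
Write `q` for the density of `P_X W_T` and `v_z = (w_T(z|x))_x`. By biregularity,
`|S|⁻¹ ∑ₛ (Q_{f,m}W_T)(z|s)² = |X|⁻¹ ⟪v_z, P_{f,m} v_z⟫`, where `P_{f,m}` is symmetric and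
row-stochastic. Its top eigenvalue is `1`, with the constant vectors as eigenvectors, so splitting
`v_z` into its mean `q(z)` and a part orthogonal to the constants, the spectral theorem gives
`|X|⁻¹ ⟪v_z, P_{f,m} v_z⟫ ≤ q(z)² + λ₂ (|X|⁻¹ ‖v_z‖² - q(z)²)`. Dividing by `q(z)` and
integrating over `z` yields
`2^{D₂(Q_{f,m}W_T ‖ P_X W_T | P_S)} ≤ (1 - λ₂) ∫ q + λ₂ 2^{D₂(W_T ‖ P_X W_T | P_X)}`, and `∫ q ≤ 1`.
-/

open MeasureTheory Filter
open scoped ENNReal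

noncomputable section
/-- The second-largest eigenvalue modulus of a real matrix `P` (intended: symmetric with
row sums `1`, so that its characteristic polynomial splits over `ℝ` and the largest
eigenvalue has the all-ones eigenvector): the eigenvalues of `P` with multiplicity are the
roots of its characteristic polynomial; we sort them increasingly, drop (one copy of) the
largest one, and take the maximum modulus of the remaining ones.  For eigenvalues
`μ₁ ≥ μ₂ ≥ ... ≥ μ_n` this is `max (|μ₂|, |μ_n|)`. -/
def secondEVmod {n : Type*} [Fintype n] [DecidableEq n] (P : Matrix n n ℝ) : ℝ :=
  ((P.charpoly.roots.sort (· ≤ ·)).dropLast.map (fun μ => |μ|)).foldr max 0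

/-- The symmetric stochastic matrix `P_{f,m}` associated with `f : S × X → N` and a
message `m`, with `(x,x')` entry `|{s : f(s,x) = f(s,x') = m}| / (d_S · d_X)`. -/
def briMatrix {S X N : Type*} [Fintype S] [DecidableEq N]
    (f : S → X → N) (m : N) (dS dX : ℕ) : Matrix X X ℝ :=
  Matrix.of fun x x' =>
    ((Finset.univ.filter fun s : S => f s x = m ∧ f s x' = m).card : ℝ) / (dS * dX)

/-- `λ₂(f,m)`: the second-largest eigenvalue modulus of the matrix `P_{f,m}`. -/
def lam2 {S X N : Type*} [Fintype S] [Fintype X] [DecidableEq X] [DecidableEq N]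
    (f : S → X → N) (m : N) (dS dX : ℕ) : ℝ :=
  secondEVmod (briMatrix f m dS dX)

/-- `f : S × X → N` is a biregular irreducible function with regularity set `M` and
degrees `(d_S, d_X)` (positive integers): for every `m ∈ M`, every `s` has exactly `d_S`
preimages `x` with `f(s,x) = m`, every `x` has exactly `d_X` preimages `s` with
`f(s,x) = m`, and the matrix `P_{f,m}` has second-largest eigenvalue modulus `< 1`. -/
structure IsBRI {S X N : Type*} [Fintype S] [Fintype X] [DecidableEq X] [DecidableEq N]
    (f : S → X → N) (M : Set N) (dS dX : ℕ) : Prop where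
  dS_pos : 0 < dS
  dX_pos : 0 < dX
  regS : ∀ m ∈ M, ∀ s : S, (Finset.univ.filter fun x : X => f s x = m).card = dS
  regX : ∀ m ∈ M, ∀ x : X, (Finset.univ.filter fun s : S => f s x = m).card = dX
  irred : ∀ m ∈ M, lam2 f m dS dX < 1
open Matrix

theorem Matrix.IsHermitian.abs_eigenvalues₀_le_secondEVmod {n : Type*} [Fintype n] [DecidableEq n]
    {A : Matrix n n ℝ} (hA : A.IsHermitian) {i : Fin (Fintype.card n)} (hi : i.val ≠ 0) :
    |hA.eigenvalues₀ i| ≤ secondEVmod A := by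
  have hroots : A.charpoly.roots = ((List.ofFn hA.eigenvalues₀).reverse : Multiset ℝ) := by
    rw [Multiset.coe_reverse, hA.roots_charpoly_eq_eigenvalues₀, Fin.univ_val_map]
    simp
  have hsort : A.charpoly.roots.sort (· ≤ ·) = (List.ofFn hA.eigenvalues₀).reverse := by
    refine List.Perm.eq_of_sortedLE ?_ hA.eigenvalues₀_antitone.sortedGE_ofFn.reverse ?_
    · exact (List.sortedLE_iff_pairwise).2 (Multiset.pairwise_sort _ _)
    · rw [← Multiset.coe_eq_coe, Multiset.sort_eq, hroots]
  have hmem : hA.eigenvalues₀ i ∈ (List.ofFn hA.eigenvalues₀).reverse.dropLast := by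
    rw [← List.mem_reverse, ← List.tail_reverse, List.reverse_reverse, List.mem_iff_getElem]
    refine ⟨i.val - 1, by simp only [List.length_tail, List.length_ofFn]; omega, ?_⟩
    simp only [List.getElem_tail, List.getElem_ofFn]
    exact congrArg _ (Fin.ext (by simp only; omega))
  rw [secondEVmod, hsort]
  exact List.le_max_of_le' 0 (List.mem_map_of_mem hmem) le_rfl

theorem Matrix.IsHermitian.exists_abs_eigenvalues_le_secondEVmod {n : Type*} [Fintype n]
    [DecidableEq n] [Nonempty n] {A : Matrix n n ℝ} (hA : A.IsHermitian) :
    ∃ j₀, ∀ j ≠ j₀, |hA.eigenvalues j| ≤ secondEVmod A := by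
  set e := (Fintype.equivOfCardEq (Fintype.card_fin _) : Fin (Fintype.card n) ≃ n)
  refine ⟨e ⟨0, Fintype.card_pos⟩, fun j hj => hA.abs_eigenvalues₀_le_secondEVmod ?_⟩
  intro h0
  exact hj (e.symm_apply_eq.mp (Fin.ext h0))

theorem Matrix.IsHermitian.eigenvalues_le_one_of_mem_rowStochastic {n : Type*} [Fintype n]
    [DecidableEq n] {A : Matrix n n ℝ} (hA : A.IsHermitian) (hS : A ∈ rowStochastic ℝ n)
    (j : n) : hA.eigenvalues j ≤ 1 := by
  have hμ : Module.End.HasEigenvalue (toLin' A) (hA.eigenvalues j) := by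
    rw [Module.End.hasEigenvalue_iff_mem_spectrum, spectrum_toLin']
    exact hA.eigenvalues_mem_spectrum_real j
  obtain ⟨k, hk⟩ := eigenvalue_mem_ball hμ
  have hrow : ∑ i ∈ Finset.univ.erase k, ‖A k i‖ = 1 - A k k := by
    simp only [Real.norm_of_nonneg (nonneg_of_mem_rowStochastic hS)]
    rw [Finset.sum_erase_eq_sub (Finset.mem_univ k), sum_row_of_mem_rowStochastic hS]
  rw [Metric.mem_closedBall, hrow, Real.dist_eq] at hk
  linarith [le_abs_self (hA.eigenvalues j - A k k)]

theorem sum_mul_sq_le_of_dotProduct_eq_zero {n : Type*} [Fintype n] {μ c d : n → ℝ} {lam : ℝ}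
    {j₀ : n} (hμ : ∀ j ≠ j₀, |μ j| ≤ lam) (hμ1 : ∀ j, μ j ≤ 1) (hd : ∀ j, μ j * d j = d j)
    (hd0 : d ≠ 0) (hdc : d ⬝ᵥ c = 0) :
    ∑ j, μ j * c j ^ 2 ≤ lam * ∑ j, c j ^ 2 := by
  have hle : ∀ j ≠ j₀, μ j ≤ lam := fun j hj => (le_abs_self _).trans (hμ j hj)
  rw [Finset.mul_sum]
  refine Finset.sum_le_sum fun j _ => ?_
  rcases ne_or_eq j j₀ with hj | rfl
  · exact mul_le_mul_of_nonneg_right (hle j hj) (sq_nonneg _)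
  rcases le_or_gt (μ j) lam with hj | hj
  · exact mul_le_mul_of_nonneg_right hj (sq_nonneg _)
  -- `μ j` is the only entry above `lam`, so the only one that can be `1`: `d` is supported at `j`,
  -- and `d ⬝ᵥ c = 0` forces `c j = 0`.
  have hd_single : ∀ i ≠ j, d i = 0 := fun i hi => by
    have hμi : μ i ≠ 1 := by linarith [hle i hi, hμ1 j]
    by_contra h
    exact hμi (mul_right_cancel₀ h (by rw [hd i, one_mul]))
  have hdj : d j ≠ 0 := fun h => hd0 (funext fun i => by
    rcases eq_or_ne i j with rfl | hi
    · exact h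
    · exact hd_single i hi)
  have hcj : c j = 0 := by
    rw [dotProduct, Finset.sum_eq_single j (fun i _ hi => by rw [hd_single i hi, zero_mul])
      (by simp)] at hdc
    exact (mul_eq_zero.mp hdc).resolve_left hdj
  simp [hcj]

theorem Matrix.IsHermitian.dotProduct_mulVec_le_secondEVmod_of_one_dotProduct_eq_zero
    {n : Type*} [Fintype n] [DecidableEq n] [Nonempty n] {A : Matrix n n ℝ} (hA : A.IsHermitian)
    (hS : A ∈ rowStochastic ℝ n) {u : n → ℝ}
    (hu : 1 ⬝ᵥ u = 0) : u ⬝ᵥ A *ᵥ u ≤ secondEVmod A * (u ⬝ᵥ u) := by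
  obtain ⟨j₀, hj₀⟩ := hA.exists_abs_eigenvalues_le_secondEVmod
  set U : Matrix n n ℝ := (hA.eigenvectorUnitary : Matrix n n ℝ)
  set μ := hA.eigenvalues
  have hUU : Uᵀ * U = 1 := by
    simpa [U, star_eq_conjTranspose] using Matrix.mem_unitaryGroup_iff'.mp hA.eigenvectorUnitary.2
  have hUU' : U * Uᵀ = 1 := by
    simpa [U, star_eq_conjTranspose] using Matrix.mem_unitaryGroup_iff.mp hA.eigenvectorUnitary.2
  have hAU : A = U * diagonal μ * Uᵀ := by
    conv_lhs => rw [hA.spectral_theorem]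
    simp [U, μ, Unitary.conjStarAlgAut_apply, star_eq_conjTranspose]
  have hdot : ∀ v w : n → ℝ, (Uᵀ *ᵥ v) ⬝ᵥ (Uᵀ *ᵥ w) = v ⬝ᵥ w := fun v w => by
    rw [dotProduct_mulVec, vecMul_mulVec, ← mulVec_transpose, transpose_transpose, hUU',
      transpose_one, one_mulVec]
  have hDU : diagonal μ = Uᵀ * A * U := by
    rw [hAU, ← mul_assoc, ← mul_assoc, hUU, one_mul, mul_assoc, hUU, mul_one]
  set c := Uᵀ *ᵥ u
  set d := Uᵀ *ᵥ (1 : n → ℝ)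
  have hquad : u ⬝ᵥ A *ᵥ u = ∑ j, μ j * c j ^ 2 := by
    rw [hAU, ← mulVec_mulVec, ← mulVec_mulVec, dotProduct_mulVec, ← mulVec_transpose,
      dotProduct]
    exact Finset.sum_congr rfl fun j _ => by rw [mulVec_diagonal]; ring
  have hnorm : u ⬝ᵥ u = ∑ j, c j ^ 2 := by
    rw [← hdot, dotProduct]
    exact Finset.sum_congr rfl fun j _ => (sq _).symm
  have hd : ∀ j, μ j * d j = d j := fun j => by
    have h : diagonal μ *ᵥ d = d := by
      rw [hDU, mulVec_mulVec, mul_assoc, mul_assoc, hUU', mul_one, ← mulVec_mulVec,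
        one_vecMul_of_mem_rowStochastic hS]
    simpa [mulVec_diagonal] using congrFun h j
  have hd0 : d ≠ 0 := fun h => by
    have h1 : U *ᵥ d = 1 := by rw [mulVec_mulVec, hUU', one_mulVec]
    rw [h, mulVec_zero] at h1
    exact zero_ne_one h1
  rw [hquad, hnorm]
  exact sum_mul_sq_le_of_dotProduct_eq_zero hj₀ (hA.eigenvalues_le_one_of_mem_rowStochastic hS)
    hd hd0 (by rw [hdot]; exact hu)

theorem Matrix.IsHermitian.dotProduct_mulVec_le_secondEVmod {n : Type*} [Fintype n] [DecidableEq n]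
    {A : Matrix n n ℝ} (hA : A.IsHermitian) (hS : A ∈ rowStochastic ℝ n)
    (v : n → ℝ) :
    v ⬝ᵥ A *ᵥ v ≤ (∑ i, v i) ^ 2 / Fintype.card n
      + secondEVmod A * (v ⬝ᵥ v - (∑ i, v i) ^ 2 / Fintype.card n) := by
  rcases isEmpty_or_nonempty n with hn | hn
  · simp [dotProduct]
  have hN : (0 : ℝ) < Fintype.card n := by exact_mod_cast Fintype.card_pos
  set t := (∑ i, v i) / Fintype.card n
  set u := v - t • (1 : n → ℝ)
  have hv : v = u + t • 1 := by simp [u]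
  have hu : 1 ⬝ᵥ u = 0 := by
    rw [dotProduct_sub, dotProduct_smul, one_dotProduct_one, one_dotProduct, smul_eq_mul,
      div_mul_cancel₀ _ hN.ne', sub_self]
  have hA1 : A *ᵥ 1 = 1 := one_vecMul_of_mem_rowStochastic hS
  have h1A : 1 ⬝ᵥ A *ᵥ u = 0 := by
    rw [dotProduct_mulVec, ← mulVec_transpose, ← conjTranspose_eq_transpose_of_trivial, hA.eq,
      hA1, hu]
  have hsq : (∑ i, v i) ^ 2 / Fintype.card n = t ^ 2 * Fintype.card n := by
    simp only [t]; field_simp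
  have hcore := hA.dotProduct_mulVec_le_secondEVmod_of_one_dotProduct_eq_zero hS hu
  rw [hsq, hv]
  simp only [mulVec_add, mulVec_smul, hA1, add_dotProduct, dotProduct_add, smul_dotProduct,
    dotProduct_smul, h1A, dotProduct_comm u 1, hu, one_dotProduct_one, smul_eq_mul]
  linarith


theorem secondEVmod_nonneg {n : Type*} [Fintype n] [DecidableEq n] (A : Matrix n n ℝ) :
    0 ≤ secondEVmod A := by
  rw [secondEVmod]
  induction (A.charpoly.roots.sort (· ≤ ·)).dropLast.map (fun μ => |μ|) with
  | nil => rfl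
  | cons a l ih => exact ih.trans (le_max_right _ _)

theorem exp2_log2E (x : ℝ≥0∞) : exp2 (log2E x) = x := by
  rcases eq_or_ne x ⊤ with rfl | hx
  · simp [log2E, exp2]
  rcases eq_or_ne x 0 with rfl | hx0
  · simp [log2E, exp2]
  rw [log2E, if_neg hx, if_neg hx0, exp2, if_neg (EReal.coe_ne_top _),
    if_neg (EReal.coe_ne_bot _), EReal.toReal_coe,
    Real.rpow_logb two_pos (by norm_num) (ENNReal.toReal_pos hx0 hx), ENNReal.ofReal_toReal hx]

theorem exp2_condRenyi2 {S Z : Type*} [Fintype S] [MeasurableSpace Z] {μ : Measure Z}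
    {p : S → ℝ} {w : S → Z → ℝ} {q : Z → ℝ} {I : S → ℝ} (hp : ∀ s, 0 ≤ p s) (hI : ∀ s, 0 ≤ I s)
    (hw : ∀ s, exp2 (renyi2Div μ (w s) q) = ENNReal.ofReal (I s)) :
    exp2 (condRenyi2 μ p w q) = ENNReal.ofReal (∑ s, p s * I s) := by
  rw [condRenyi2, exp2_log2E, ENNReal.ofReal_sum_of_nonneg fun s _ => mul_nonneg (hp s) (hI s)]
  simp only [hw, ENNReal.ofReal_mul (hp _)]

theorem sq_div_le_mul_of_le_mul {a b c : ℝ} (ha : 0 ≤ a) (hb : 0 ≤ b) (h : a ≤ c * b) :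
    a ^ 2 / b ≤ c * a := by
  rcases hb.eq_or_lt with rfl | hb
  · simp [le_antisymm (by simpa using h) ha]
  rw [div_le_iff₀ hb]
  nlinarith

theorem support_sq_div_of_le_mul {Z : Type*} {g q : Z → ℝ} {c : ℝ} (hg0 : 0 ≤ g)
    (hgq : ∀ z, g z ≤ c * q z) :
    Function.support (fun z => g z ^ 2 / q z) = Function.support g := by
  ext z
  simp only [Function.mem_support, div_ne_zero_iff, pow_ne_zero_iff two_ne_zero,
    and_iff_left_iff_imp]
  intro hz hqz
  have := hgq z
  rw [hqz, mul_zero] at this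
  exact hz (le_antisymm this (hg0 z))

section Dominated

variable {Z : Type*} [MeasurableSpace Z] {μ : Measure Z} {g q : Z → ℝ} {c : ℝ}

theorem integrable_sq_div_of_le_mul (hg : Integrable g μ) (hq : AEMeasurable q μ)
    (hq0 : 0 ≤ q) (hg0 : 0 ≤ g) (hgq : ∀ z, g z ≤ c * q z) :
    Integrable (fun z => g z ^ 2 / q z) μ := by
  refine (hg.const_mul c).mono ((hg.aemeasurable.pow_const 2).div hq).aestronglyMeasurable
    (ae_of_all _ fun z => ?_)
  rw [Real.norm_of_nonneg (div_nonneg (sq_nonneg _) (hq0 z))]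
  exact (sq_div_le_mul_of_le_mul (hg0 z) (hq0 z) (hgq z)).trans (le_abs_self _)

theorem exp2_renyi2Div_of_le_mul (hg : Integrable g μ) (hq : AEMeasurable q μ) (hq0 : 0 ≤ q)
    (hg0 : 0 ≤ g) (hgq : ∀ z, g z ≤ c * q z) (hpos : 0 < ∫ z, g z ∂μ) :
    exp2 (renyi2Div μ g q) = ENNReal.ofReal (∫ z, g z ^ 2 / q z ∂μ) := by
  have hnull : {z | q z = 0 ∧ 0 < g z} = ∅ :=
    Set.eq_empty_iff_forall_notMem.mpr fun z ⟨hqz, hgz⟩ => by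
      simpa [hqz] using hgz.trans_le (hgq z)
  have hint := integrable_sq_div_of_le_mul hg hq hq0 hg0 hgq
  have hpos' : 0 < ∫ z, g z ^ 2 / q z ∂μ := by
    rw [integral_pos_iff_support_of_nonneg (fun z => div_nonneg (sq_nonneg _) (hq0 z)) hint,
      support_sq_div_of_le_mul hg0 hgq, ← integral_pos_iff_support_of_nonneg hg0 hg]
    exact hpos
  rw [renyi2Div, if_pos ⟨by rw [hnull, measure_empty], hint⟩, exp2,
    if_neg (EReal.coe_ne_top _), if_neg (EReal.coe_ne_bot _), EReal.toReal_coe,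
    Real.rpow_logb two_pos (by norm_num) hpos']

end Dominated

theorem unif_nonneg (X : Type*) [Fintype X] (x : X) : 0 ≤ unif X x := by
  simp only [unif]; positivity

theorem sum_unif_le_one (X : Type*) [Fintype X] : ∑ x, unif X x ≤ 1 := by
  simp only [unif, Finset.sum_const, Finset.card_univ, nsmul_eq_mul, mul_one_div]
  exact div_self_le_one _

section Mixture

variable {X Z : Type*} [Fintype X] {p : X → ℝ} {w : X → Z → ℝ}

theorem mixDensity_nonneg (hp : ∀ x, 0 ≤ p x) (hw : ∀ x z, 0 ≤ w x z) : 0 ≤ mixDensity p w :=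
  fun z => Finset.sum_nonneg fun x _ => mul_nonneg (hp x) (hw x z)

theorem mixDensity_le (hp : ∀ x, 0 ≤ p x) (hp1 : ∑ x, p x = 1) {z : Z} {b : ℝ}
    (h : ∀ x, w x z ≤ b) : mixDensity p w z ≤ b :=
  calc mixDensity p w z ≤ ∑ x, p x * b :=
        Finset.sum_le_sum fun x _ => mul_le_mul_of_nonneg_left (h x) (hp x)
    _ = b := by rw [← Finset.sum_mul, hp1, one_mul]

theorem le_card_mul_mixDensity_unif (hw : ∀ x z, 0 ≤ w x z) (x : X) (z : Z) :
    w x z ≤ Fintype.card X * mixDensity (unif X) w z := by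
  have h : unif X x * w x z ≤ mixDensity (unif X) w z :=
    Finset.single_le_sum (f := fun x => unif X x * w x z)
      (fun x _ => mul_nonneg (unif_nonneg X x) (hw x z)) (Finset.mem_univ x)
  have hX : (Fintype.card X : ℝ) ≠ 0 := by
    exact_mod_cast (Fintype.card_pos_iff.mpr ⟨x⟩).ne'
  calc w x z = Fintype.card X * (unif X x * w x z) := by simp only [unif]; field_simp
    _ ≤ _ := by gcongr

variable [MeasurableSpace Z] {μ : Measure Z}

theorem integrable_mixDensity (hw : ∀ x, Integrable (w x) μ) :
    Integrable (mixDensity p w) μ :=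
  integrable_finsetSum _ fun x _ => (hw x).const_mul (p x)

theorem integral_mixDensity (hw : ∀ x, Integrable (w x) μ) :
    ∫ z, mixDensity p w z ∂μ = ∑ x, p x * ∫ z, w x z ∂μ := by
  simp only [mixDensity]
  rw [integral_finsetSum _ fun x _ => (hw x).const_mul (p x)]
  simp only [integral_const_mul]

theorem integral_mixDensity_pos (hp : ∀ x, 0 ≤ p x) (hp1 : ∑ x, p x = 1)
    (hw : ∀ x, Integrable (w x) μ) (hpos : ∀ x, 0 < ∫ z, w x z ∂μ) :
    0 < ∫ z, mixDensity p w z ∂μ := by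
  obtain ⟨x, -, hx⟩ :=
    Finset.exists_lt_of_sum_lt (s := Finset.univ) (f := fun _ => (0 : ℝ)) (g := p) (by simp [hp1])
  rw [integral_mixDensity hw]
  exact Finset.sum_pos' (fun x _ => mul_nonneg (hp x) (hpos x).le)
    ⟨x, Finset.mem_univ x, mul_pos hx (hpos x)⟩

theorem integral_mixDensity_le_one (hp : ∀ x, 0 ≤ p x) (hp1 : ∑ x, p x ≤ 1)
    (hw : ∀ x, Integrable (w x) μ) (hle : ∀ x, ∫ z, w x z ∂μ ≤ 1) :
    ∫ z, mixDensity p w z ∂μ ≤ 1 := by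
  rw [integral_mixDensity hw]
  calc ∑ x, p x * ∫ z, w x z ∂μ ≤ ∑ x, p x :=
        Finset.sum_le_sum fun x _ => mul_le_of_le_one_right (hp x) (hle x)
    _ ≤ 1 := hp1

end Mixture

section BRI

variable {S X N : Type*} [DecidableEq N] {f : S → X → N} {m : N} {dS dX : ℕ}

def briIncidence (f : S → X → N) (m : N) : Matrix S X ℝ :=
  Matrix.of fun s x => if f s x = m then 1 else 0

theorem briIncidence_nonneg (f : S → X → N) (m : N) (s : S) (x : X) :
    0 ≤ briIncidence f m s x := by
  simp only [briIncidence, Matrix.of_apply]; positivity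

theorem briChannelDensity_eq_mixDensity [Fintype X] {Z : Type*} (w : X → Z → ℝ) (s : S) :
    briChannelDensity f m dS w s = mixDensity (fun x => (dS : ℝ)⁻¹ * briIncidence f m s x) w := by
  ext z
  simp [briChannelDensity, mixDensity, briIncidence]

theorem briChannelDensity_apply [Fintype X] {Z : Type*} (w : X → Z → ℝ) (s : S) (z : Z) :
    briChannelDensity f m dS w s z = (dS : ℝ)⁻¹ * (briIncidence f m *ᵥ fun x => w x z) s := by
  simp [briChannelDensity, briIncidence, Matrix.mulVec, dotProduct, Finset.mul_sum]

theorem briChannelDensity_nonneg [Fintype X] {Z : Type*} {w : X → Z → ℝ}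
    (hw : ∀ x z, 0 ≤ w x z) (s : S) :
    0 ≤ briChannelDensity f m dS w s := by
  rw [briChannelDensity_eq_mixDensity]
  exact mixDensity_nonneg (fun x => mul_nonneg (by positivity) (briIncidence_nonneg f m s x)) hw

theorem integrable_briChannelDensity [Fintype X] {Z : Type*} [MeasurableSpace Z] {μ : Measure Z}
    {w : X → Z → ℝ} (hw : ∀ x, Integrable (w x) μ) (s : S) :
    Integrable (briChannelDensity f m dS w s) μ := by
  rw [briChannelDensity_eq_mixDensity]
  exact integrable_mixDensity hw

variable [Fintype S]

theorem briMatrix_eq_smul_transpose_mul (f : S → X → N) (m : N) (dS dX : ℕ) :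
    briMatrix f m dS dX = ((dS : ℝ) * dX)⁻¹ • ((briIncidence f m)ᵀ * briIncidence f m) := by
  ext x x'
  simp only [briMatrix, briIncidence, Matrix.smul_apply, Matrix.mul_apply,
    Matrix.transpose_apply, Matrix.of_apply, ite_mul, one_mul, zero_mul, ← ite_and,
    Finset.sum_boole, smul_eq_mul, div_eq_inv_mul]

theorem briMatrix_isHermitian (f : S → X → N) (m : N) (dS dX : ℕ) :
    (briMatrix f m dS dX).IsHermitian :=
  Matrix.IsHermitian.ext fun x x' => by
    simp only [briMatrix, Matrix.of_apply, star_trivial]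
    congr 3
    ext s
    simp only [Finset.mem_filter, Finset.mem_univ, true_and]
    exact and_comm

variable [Fintype X] [DecidableEq X] {M : Set N}

theorem IsBRI.incidence_mulVec_one (hf : IsBRI f M dS dX) (hm : m ∈ M) :
    briIncidence f m *ᵥ 1 = (dS : ℝ) • 1 := by
  ext s
  simp [briIncidence, Matrix.mulVec, dotProduct, Finset.sum_boole, hf.regS m hm s]

theorem IsBRI.incidence_transpose_mulVec_one (hf : IsBRI f M dS dX) (hm : m ∈ M) :
    (briIncidence f m)ᵀ *ᵥ 1 = (dX : ℝ) • 1 := by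
  ext x
  simp [briIncidence, Matrix.mulVec, dotProduct, Finset.sum_boole, hf.regX m hm x]

theorem IsBRI.card_mul_eq (hf : IsBRI f M dS dX) (hm : m ∈ M) :
    (Fintype.card S : ℝ) * dS = Fintype.card X * dX := by
  have h := Matrix.dotProduct_mulVec (1 : S → ℝ) (briIncidence f m) 1
  rw [hf.incidence_mulVec_one hm, ← Matrix.mulVec_transpose,
    hf.incidence_transpose_mulVec_one hm] at h
  simpa [mul_comm] using h

theorem IsBRI.briMatrix_mem_rowStochastic (hf : IsBRI f M dS dX) (hm : m ∈ M) :
    briMatrix f m dS dX ∈ Matrix.rowStochastic ℝ X := by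
  have hdS : (dS : ℝ) ≠ 0 := by exact_mod_cast hf.dS_pos.ne'
  have hdX : (dX : ℝ) ≠ 0 := by exact_mod_cast hf.dX_pos.ne'
  refine ⟨fun x x' => by simp only [briMatrix, Matrix.of_apply]; positivity, ?_⟩
  rw [briMatrix_eq_smul_transpose_mul, Matrix.smul_mulVec, ← Matrix.mulVec_mulVec,
    hf.incidence_mulVec_one hm, Matrix.mulVec_smul, hf.incidence_transpose_mulVec_one hm,
    smul_smul, smul_smul]
  field_simp
  simp

theorem IsBRI.sum_briWeights (hf : IsBRI f M dS dX) (hm : m ∈ M) (s : S) :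
    ∑ x, (dS : ℝ)⁻¹ * briIncidence f m s x = 1 := by
  have h := congrFun (hf.incidence_mulVec_one hm) s
  simp only [Matrix.mulVec, dotProduct, Pi.one_apply, mul_one, Pi.smul_apply, smul_eq_mul] at h
  rw [← Finset.mul_sum, h, inv_mul_cancel₀ (by exact_mod_cast hf.dS_pos.ne')]

theorem IsBRI.briChannelDensity_le_card_mul {Z : Type*} (hf : IsBRI f M dS dX) (hm : m ∈ M)
    {w : X → Z → ℝ} (hw : ∀ x z, 0 ≤ w x z) (s : S) (z : Z) :
    briChannelDensity f m dS w s z ≤ Fintype.card X * mixDensity (unif X) w z := by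
  rw [briChannelDensity_eq_mixDensity]
  exact mixDensity_le (fun x => mul_nonneg (by positivity) (briIncidence_nonneg f m s x))
    (hf.sum_briWeights hm s) fun x => le_card_mul_mixDensity_unif hw x z

theorem IsBRI.integral_briChannelDensity_pos {Z : Type*} [MeasurableSpace Z] {μ : Measure Z}
    (hf : IsBRI f M dS dX) (hm : m ∈ M) {w : X → Z → ℝ} (hw : ∀ x, Integrable (w x) μ)
    (hpos : ∀ x, 0 < ∫ z, w x z ∂μ) (s : S) : 0 < ∫ z, briChannelDensity f m dS w s z ∂μ := by
  rw [briChannelDensity_eq_mixDensity]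
  exact integral_mixDensity_pos (fun x => mul_nonneg (by positivity) (briIncidence_nonneg f m s x))
    (hf.sum_briWeights hm s) hw hpos

theorem IsBRI.sum_sq_briChannelDensity {Z : Type*} (hf : IsBRI f M dS dX) (hm : m ∈ M)
    (w : X → Z → ℝ) (z : Z) :
    (∑ s, briChannelDensity f m dS w s z ^ 2) / Fintype.card S
      = (fun x => w x z) ⬝ᵥ briMatrix f m dS dX *ᵥ (fun x => w x z) / Fintype.card X := by
  set v := fun x => w x z
  set B := briIncidence f m
  have hsum : ∑ s, briChannelDensity f m dS w s z ^ 2 = (dS : ℝ)⁻¹ ^ 2 * (B *ᵥ v) ⬝ᵥ (B *ᵥ v) := by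
    simp only [briChannelDensity_apply, dotProduct, Finset.mul_sum, sq]
    exact Finset.sum_congr rfl fun s _ => by ring
  have hquad : v ⬝ᵥ briMatrix f m dS dX *ᵥ v = ((dS : ℝ) * dX)⁻¹ * (B *ᵥ v) ⬝ᵥ (B *ᵥ v) := by
    rw [briMatrix_eq_smul_transpose_mul, Matrix.smul_mulVec, dotProduct_smul, smul_eq_mul,
      ← Matrix.mulVec_mulVec, Matrix.dotProduct_mulVec, Matrix.vecMul_transpose]
  have hcard := hf.card_mul_eq hm
  rw [hsum, hquad]
  calc _ = (dS : ℝ)⁻¹ * (B *ᵥ v) ⬝ᵥ (B *ᵥ v) / (Fintype.card S * dS) := by ring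
    _ = _ := by rw [hcard]; ring

end BRI


section Bound

variable {S X N Z : Type*} [Fintype S] [Fintype X] [DecidableEq X] [DecidableEq N]
  {f : S → X → N} {M : Set N} {dS dX : ℕ} {m : N}

theorem IsBRI.mixDensity_sq_div_le (hf : IsBRI f M dS dX) (hm : m ∈ M) {w : X → Z → ℝ}
    (hw : ∀ x z, 0 ≤ w x z) (z : Z) :
    mixDensity (unif S)
        (fun s z => briChannelDensity f m dS w s z ^ 2 / mixDensity (unif X) w z) z
      ≤ mixDensity (unif X) w z + lam2 f m dS dX *
          (mixDensity (unif X) (fun x z => w x z ^ 2 / mixDensity (unif X) w z) z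
            - mixDensity (unif X) w z) := by
  set Q := mixDensity (unif X) w
  set q := Q z
  set v := fun x => w x z
  set P := briMatrix f m dS dX
  have hq0 : 0 ≤ q := mixDensity_nonneg (unif_nonneg X) hw z
  have hq : q = (∑ x, v x) / Fintype.card X := by
    simp only [q, Q, mixDensity, unif, Finset.sum_div, v]
    exact Finset.sum_congr rfl fun x _ => by ring
  have hqq : q ^ 2 / q = q := by rw [sq, mul_self_div_self]
  have hlhs : mixDensity (unif S) (fun s z => briChannelDensity f m dS w s z ^ 2 / Q z) z
      = v ⬝ᵥ P *ᵥ v / Fintype.card X / q := by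
    rw [mixDensity, ← hf.sum_sq_briChannelDensity hm, Finset.sum_div, Finset.sum_div]
    exact Finset.sum_congr rfl fun s _ => by simp only [unif]; ring
  have hrhs : mixDensity (unif X) (fun x z => w x z ^ 2 / Q z) z
      = v ⬝ᵥ v / Fintype.card X / q := by
    simp only [mixDensity, dotProduct, Finset.sum_div, unif, v]
    exact Finset.sum_congr rfl fun x _ => by ring
  have hquad := (briMatrix_isHermitian f m dS dX).dotProduct_mulVec_le_secondEVmod
    (hf.briMatrix_mem_rowStochastic hm) v
  rw [hlhs, hrhs]
  calc v ⬝ᵥ P *ᵥ v / Fintype.card X / q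
      ≤ ((∑ x, v x) ^ 2 / Fintype.card X
          + secondEVmod P * (v ⬝ᵥ v - (∑ x, v x) ^ 2 / Fintype.card X)) / Fintype.card X / q := by
        gcongr
    _ = (q ^ 2 + lam2 f m dS dX * (v ⬝ᵥ v / Fintype.card X - q ^ 2)) / q := by
        rw [hq, lam2]; ring
    _ = q + lam2 f m dS dX * (v ⬝ᵥ v / Fintype.card X / q - q) := by
        rw [add_div, mul_div_assoc, sub_div, hqq]

theorem IsBRI.exp2_condRenyi2_le [MeasurableSpace Z] {μ : Measure Z} (hf : IsBRI f M dS dX)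
    (hm : m ∈ M) {w : X → Z → ℝ} (hw : ∀ x z, 0 ≤ w x z) (hw_int : ∀ x, Integrable (w x) μ)
    (hw_pos : ∀ x, 0 < ∫ z, w x z ∂μ) (hw_le : ∀ x, ∫ z, w x z ∂μ ≤ 1) :
    exp2 (condRenyi2 μ (unif S) (briChannelDensity f m dS w) (mixDensity (unif X) w))
      ≤ 1 + ENNReal.ofReal (lam2 f m dS dX) *
          exp2 (condRenyi2 μ (unif X) w (mixDensity (unif X) w)) := by
  set q := mixDensity (unif X) w
  set p := briChannelDensity f m dS w
  set lam := lam2 f m dS dX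
  have hq_int : Integrable q μ := integrable_mixDensity hw_int
  have hq0 : 0 ≤ q := mixDensity_nonneg (unif_nonneg X) hw
  have hwq : ∀ x z, w x z ≤ Fintype.card X * q z := le_card_mul_mixDensity_unif hw
  have hp_int : ∀ s, Integrable (p s) μ := fun s => integrable_briChannelDensity hw_int s
  have hp0 : ∀ s, 0 ≤ p s := briChannelDensity_nonneg hw
  have hpq : ∀ s z, p s z ≤ Fintype.card X * q z := hf.briChannelDensity_le_card_mul hm hw
  have hIp := fun s =>
    integrable_sq_div_of_le_mul (hp_int s) hq_int.aemeasurable hq0 (hp0 s) (hpq s)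
  have hIw := fun x =>
    integrable_sq_div_of_le_mul (hw_int x) hq_int.aemeasurable hq0 (hw x) (hwq x)
  have hI0 : ∀ g : Z → ℝ, 0 ≤ ∫ z, g z ^ 2 / q z ∂μ := fun g =>
    integral_nonneg fun z => div_nonneg (sq_nonneg _) (hq0 z)
  rw [exp2_condRenyi2 (unif_nonneg S) (fun s => hI0 (p s)) fun s =>
      exp2_renyi2Div_of_le_mul (hp_int s) hq_int.aemeasurable hq0 (hp0 s) (hpq s)
        (hf.integral_briChannelDensity_pos hm hw_int hw_pos s),
    exp2_condRenyi2 (unif_nonneg X) (fun x => hI0 (w x)) fun x =>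
      exp2_renyi2Div_of_le_mul (hw_int x) hq_int.aemeasurable hq0 (hw x) (hwq x) (hw_pos x)]
  have hgap_int : Integrable (fun z =>
      lam * (mixDensity (unif X) (fun x z => w x z ^ 2 / q z) z - q z)) μ :=
    ((integrable_mixDensity hIw).sub hq_int).const_mul lam
  have hbound := integral_mono (g := fun z =>
      q z + lam * (mixDensity (unif X) (fun x z => w x z ^ 2 / q z) z - q z))
    (integrable_mixDensity hIp) (hq_int.add hgap_int)
    (hf.mixDensity_sq_div_le hm hw)
  rw [integral_mixDensity hIp, integral_add hq_int hgap_int, integral_const_mul,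
    integral_sub (integrable_mixDensity hIw) hq_int, integral_mixDensity hIw] at hbound
  have hq1 : ∫ z, q z ∂μ ≤ 1 :=
    integral_mixDensity_le_one (unif_nonneg X) (sum_unif_le_one X) hw_int hw_le
  have hlam : 0 ≤ lam := secondEVmod_nonneg _
  have hlam1 : lam < 1 := hf.irred m hm
  calc _ ≤ ENNReal.ofReal (1 + lam * ∑ x, unif X x * ∫ z, w x z ^ 2 / q z ∂μ) :=
        ENNReal.ofReal_le_ofReal
          (by nlinarith [mul_nonneg (sub_nonneg.2 hlam1.le) (sub_nonneg.2 hq1)])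
    _ ≤ _ := ENNReal.ofReal_add_le.trans_eq (by rw [ENNReal.ofReal_one, ENNReal.ofReal_mul hlam])

end Bound

section RestrictChan

variable {X Z : Type*} {w : X → Z → ℝ} {T : Set (X × Z)}

theorem restrictChan_nonneg (hw : ∀ x z, 0 ≤ w x z) (x : X) (z : Z) :
    0 ≤ restrictChan w T x z :=
  Set.indicator_nonneg (fun z _ => hw x z) z

theorem integral_restrictChan_le [MeasurableSpace Z] {μ : Measure Z} (hw : ∀ x z, 0 ≤ w x z)
    {x : X} (hw_int : Integrable (w x) μ) (hT : MeasurableSet {z | (x, z) ∈ T}) :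
    ∫ z, restrictChan w T x z ∂μ ≤ ∫ z, w x z ∂μ :=
  integral_mono (hw_int.indicator hT) hw_int (Set.indicator_le_self' fun z _ => hw x z)

end RestrictChan

theorem stmt_13_general {S X N Z : Type*} [Fintype S] [Fintype X] [DecidableEq X] [DecidableEq N]
    [MeasurableSpace Z] (μ : Measure Z)
    (f : S → X → N) (M : Set N) (dS dX : ℕ) (hf : IsBRI f M dS dX)
    (w : X → Z → ℝ) (hw0 : ∀ x z, 0 ≤ w x z)
    (hw1 : ∀ x, (∫ z, w x z ∂μ) = 1)
    (T : Set (X × Z)) (hTmeas : ∀ x : X, MeasurableSet {z | (x, z) ∈ T})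
    (hTpos : ∀ x : X, 0 < ∫ z, restrictChan w T x z ∂μ)
    (m : N) (hm : m ∈ M) :
    exp2 (condRenyi2 μ (unif S) (briChannelDensity f m dS (restrictChan w T))
        (mixDensity (unif X) (restrictChan w T)))
      ≤ 1 + ENNReal.ofReal (lam2 f m dS dX) *
          exp2 (condRenyi2 μ (unif X) (restrictChan w T)
            (mixDensity (unif X) (restrictChan w T))) := by
  have hw_int : ∀ x, Integrable (w x) μ := fun x =>
    Integrable.of_integral_ne_zero (by rw [hw1]; exact one_ne_zero)
  exact hf.exp2_condRenyi2_le hm (restrictChan_nonneg hw0)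
    (fun x => (hw_int x).indicator (hTmeas x)) hTpos
    fun x => (integral_restrictChan_le hw0 (hw_int x) (hTmeas x)).trans_eq (hw1 x)

/-- **Lemma 10 of the paper.** For a biregular irreducible function `f`
with regularity set `M`, a channel `W : X → Z` and a (sectionwise measurable) set
`T ⊆ X × Z` with `W_T(Z|x) > 0` for all `x`, every `m ∈ M` satisfies
`2^{D₂(Q_{f,m}W_T ‖ P_X W_T | P_S)} ≤ 1 + λ₂(f,m)·2^{D₂(W_T ‖ P_X W_T | P_X)}`. -/
theorem stmt_13 {S X N Z : Type*} [Fintype S] [Fintype X] [DecidableEq X] [DecidableEq N]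
    [MeasurableSpace Z] (μ : Measure Z)
    (f : S → X → N) (M : Set N) (dS dX : ℕ) (hf : IsBRI f M dS dX)
    (w : X → Z → ℝ) (hw_meas : ∀ x, Measurable (w x)) (hw0 : ∀ x z, 0 ≤ w x z)
    (hw1 : ∀ x, (∫ z, w x z ∂μ) = 1)
    (T : Set (X × Z)) (hTmeas : ∀ x : X, MeasurableSet {z | (x, z) ∈ T})
    (hTpos : ∀ x : X, 0 < ∫ z, restrictChan w T x z ∂μ)
    (m : N) (hm : m ∈ M) :
    exp2 (condRenyi2 μ (unif S) (briChannelDensity f m dS (restrictChan w T))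
        (mixDensity (unif X) (restrictChan w T)))
      ≤ 1 + ENNReal.ofReal (lam2 f m dS dX) *
          exp2 (condRenyi2 μ (unif X) (restrictChan w T)
            (mixDensity (unif X) (restrictChan w T))) :=
  stmt_13_general μ f M dS dX hf w hw0 hw1 T hTmeas hTpos m hm
end
end

section
/- Let f : S × X → N be a biregular irreducible function with regularity set M and degrees (d_S, d_X), let W : X → Z be a channel with densities with respect to a reference measure μ, let ε > 0, and let T ⊆ X × Z be a measurable set with W({z : (x,z) ∈ T}|x) > 1 − ε for all x ∈ X. Then for every m ∈ M (with P_S the uniform distribution on S): D(Q_{f,m}W ‖ P_X W | P_S) ≤ D(Q_{f,m}W_T ‖ P_X W_T | P_S) + ε · log(|X|/d_S). -/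
open MeasureTheory Filter
open scoped ENNReal

noncomputable section
private lemma ereal_coe_sum {A : Type*} (s : Finset A) (g : A → ℝ) :
    (((∑ a ∈ s, g a : ℝ)) : EReal) = ∑ a ∈ s, ((g a : ℝ) : EReal) := by
  induction s using Finset.cons_induction with
  | empty => simp
  | cons a s ha ih => rw [Finset.sum_cons, Finset.sum_cons, EReal.coe_add, ih]

private lemma core1 {x y : ℝ} (hx : 0 ≤ x) (hy : 0 < y) : x - y ≤ x * Real.log (x / y) := by
  rcases hx.eq_or_lt with h | h
  · simp [← h]; linarith
  · have h1 : Real.log (y / x) ≤ y / x - 1 := Real.log_le_sub_one_of_pos (by positivity)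
    have h2 : Real.log (x / y) = - Real.log (y / x) := by
      rw [← Real.log_inv]; congr 1; field_simp
    have h3 := mul_le_mul_of_nonneg_left h1 h.le
    rw [h2]
    have h4 : x * (y / x - 1) = y - x := by field_simp
    nlinarith

private lemma logsum {a b c d : ℝ} (ha : 0 ≤ a) (hb : 0 ≤ b) (hc : 0 ≤ c) (hd : 0 ≤ d)
    (hab : b = 0 → a = 0) (hcd : d = 0 → c = 0) :
    (a + c) * Real.log ((a + c) / (b + d)) ≤ a * Real.log (a / b) + c * Real.log (c / d) := by
  rcases eq_or_lt_of_le (by linarith : (0:ℝ) ≤ b + d) with hbd | hbd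
  · have hb0 : b = 0 := by linarith
    have hd0 : d = 0 := by linarith
    simp [hab hb0, hcd hd0]
  set u := (a + c) / (b + d) with hu
  have hu0 : 0 ≤ u := by positivity
  have key : ∀ x y : ℝ, 0 ≤ x → 0 ≤ y → (y = 0 → x = 0) → x ≤ a + c →
      x - y * u ≤ x * Real.log (x / y) - x * Real.log u := by
    intro x y hx hy hxy hxac
    rcases hx.eq_or_lt with h | h
    · simp [← h]; positivity
    · have hy' : 0 < y := lt_of_le_of_ne (by assumption) (fun h' => by simp [hxy h'.symm] at h)
      have hupos : 0 < u := div_pos (by linarith) hbd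
      have hyu : 0 < y * u := by positivity
      have h5 := core1 hx hyu
      have h6 : Real.log (x / (y * u)) = Real.log (x / y) - Real.log u := by
        rw [← div_div, Real.log_div (by positivity) (by positivity)]
      rw [h6, mul_sub] at h5
      linarith
  have k1 := key a b ha hb hab (by linarith)
  have k2 := key c d hc hd hcd (by linarith)
  have hsp : (a + c) * Real.log u = a * Real.log u + c * Real.log u := by ring
  have huu : (b + d) * u = a + c := by
    rw [hu, mul_comm]; exact div_mul_cancel₀ _ (ne_of_gt hbd)
  nlinarith

private lemma logsumb {a b c d : ℝ} (ha : 0 ≤ a) (hb : 0 ≤ b) (hc : 0 ≤ c) (hd : 0 ≤ d)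
    (hab : b = 0 → a = 0) (hcd : d = 0 → c = 0) :
    (a + c) * Real.logb 2 ((a + c) / (b + d)) ≤ a * Real.logb 2 (a / b) + c * Real.logb 2 (c / d) := by
  have h := logsum ha hb hc hd hab hcd
  have h2 : (0:ℝ) < Real.log 2 := Real.log_pos (by norm_num)
  simp only [Real.logb]
  rw [mul_div_assoc', mul_div_assoc', mul_div_assoc', ← add_div]
  gcongr

private lemma core1b {x y : ℝ} (hx : 0 ≤ x) (hxy : y = 0 → x = 0) (hy : 0 ≤ y) :
    (x - y) / Real.log 2 ≤ x * Real.logb 2 (x / y) := by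
  have h2 : (0:ℝ) < Real.log 2 := Real.log_pos (by norm_num)
  rcases hy.eq_or_lt with h | h
  · simp [hxy h.symm, ← h]
  · have := core1 hx h
    simp only [Real.logb]
    rw [mul_div_assoc']
    gcongr

private lemma mullogb_le {c d K : ℝ} (hc : 0 ≤ c) (hd : 0 ≤ d) (hcd : d = 0 → c = 0)
    (hK : c ≤ K * d) (hK1 : 1 ≤ K) : c * Real.logb 2 (c / d) ≤ c * Real.logb 2 K := by
  rcases hc.eq_or_lt with h | h
  · simp [← h]
  · have hd' : 0 < d := lt_of_le_of_ne hd (fun h' => by simp [hcd h'.symm] at h)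
    apply mul_le_mul_of_nonneg_left _ hc
    apply Real.logb_le_logb_of_le (by norm_num : (1:ℝ) < 2) (by positivity)
    rw [div_le_iff₀ hd']; linarith

private lemma per_s {Z : Type*} [MeasurableSpace Z] (μ : Measure Z) (p pT q qT : Z → ℝ) (K ε : ℝ)
    (hK1 : 1 ≤ K)
    (hmp : Measurable p) (hmq : Measurable q)
    (h0pT : ∀ z, 0 ≤ pT z) (h0qT : ∀ z, 0 ≤ qT z)
    (hpTp : ∀ z, pT z ≤ p z) (hqTq : ∀ z, qT z ≤ q z)
    (hpKq : ∀ z, p z ≤ K * q z)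
    (hpCKqC : ∀ z, p z - pT z ≤ K * (q z - qT z))
    (hip : Integrable p μ) (hiq : Integrable q μ) (hipT : Integrable pT μ)
    (hnull : μ {z | qT z = 0 ∧ 0 < pT z} = 0)
    (hiT : Integrable (fun z => pT z * Real.logb 2 (pT z / qT z)) μ)
    (hεint : (∫ z, p z ∂μ) - (∫ z, pT z ∂μ) ≤ ε) :
    Integrable (fun z => p z * Real.logb 2 (p z / q z)) μ ∧
    (∫ z, p z * Real.logb 2 (p z / q z) ∂μ) ≤
      (∫ z, pT z * Real.logb 2 (pT z / qT z) ∂μ) + ε * Real.logb 2 K := by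
  have hlog2 : (0:ℝ) < Real.log 2 := Real.log_pos (by norm_num)
  have h0p : ∀ z, 0 ≤ p z := fun z => (h0pT z).trans (hpTp z)
  have h0q : ∀ z, 0 ≤ q z := fun z => (h0qT z).trans (hqTq z)
  have hq0p : ∀ z, q z = 0 → p z = 0 := by
    intro z h
    have := hpKq z
    rw [h, mul_zero] at this
    linarith [h0p z]
  set g : Z → ℝ := fun z => pT z * Real.logb 2 (pT z / qT z) + (p z - pT z) * Real.logb 2 K
    with hg_def
  have hg : Integrable g μ := hiT.add ((hip.sub hipT).mul_const _)
  set L : Z → ℝ := fun z => (p z - q z) / Real.log 2 with hL_def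
  have hL : Integrable L μ := (hip.sub hiq).div_const _
  have hub : ∀ᵐ z ∂μ, p z * Real.logb 2 (p z / q z) ≤ g z := by
    have hae : ∀ᵐ z ∂μ, ¬(qT z = 0 ∧ 0 < pT z) := by
      rw [ae_iff]; simpa using hnull
    filter_upwards [hae] with z hz
    have hab : qT z = 0 → pT z = 0 := by
      intro h
      by_contra h'
      exact hz ⟨h, lt_of_le_of_ne (h0pT z) (Ne.symm h')⟩
    have hcd : q z - qT z = 0 → p z - pT z = 0 := by
      intro h
      have h2 := hpCKqC z
      rw [h, mul_zero] at h2
      linarith [hpTp z]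
    have key := logsumb (h0pT z) (h0qT z) (by linarith [hpTp z]) (by linarith [hqTq z]) hab hcd
    have e1 : pT z + (p z - pT z) = p z := by ring
    have e2 : qT z + (q z - qT z) = q z := by ring
    rw [e1, e2] at key
    have key2 := mullogb_le (by linarith [hpTp z]) (by linarith [hqTq z]) hcd (hpCKqC z) hK1
    simp only [hg_def]
    linarith
  have hlb : ∀ z, L z ≤ p z * Real.logb 2 (p z / q z) := by
    intro z
    exact core1b (h0p z) (hq0p z) (h0q z)
  have hmeas : AEStronglyMeasurable (fun z => p z * Real.logb 2 (p z / q z)) μ := by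
    apply Measurable.aestronglyMeasurable
    simp only [Real.logb]
    exact hmp.mul (((hmp.div hmq).log).div_const _)
  have hint : Integrable (fun z => p z * Real.logb 2 (p z / q z)) μ :=
    integrable_of_le_of_le hmeas (Filter.Eventually.of_forall hlb) hub hL hg
  refine ⟨hint, ?_⟩
  calc ∫ z, p z * Real.logb 2 (p z / q z) ∂μ ≤ ∫ z, g z ∂μ := integral_mono_ae hint hg hub
    _ = (∫ z, pT z * Real.logb 2 (pT z / qT z) ∂μ)
        + ((∫ z, p z ∂μ) - (∫ z, pT z ∂μ)) * Real.logb 2 K := by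
        have hisub : Integrable (fun z => (p z - pT z) * Real.logb 2 K) μ :=
          (hip.sub hipT).mul_const _
        have e3 : ∫ z, (p z - pT z) * Real.logb 2 K ∂μ
            = (∫ z, (p z - pT z) ∂μ) * Real.logb 2 K := integral_mul_const _ _
        have e4 : ∫ z, (p z - pT z) ∂μ = (∫ z, p z ∂μ) - ∫ z, pT z ∂μ :=
          integral_sub hip hipT
        simp only [hg_def]
        rw [integral_add hiT hisub, e3, e4]
    _ ≤ _ := by
        have h0 : (0:ℝ) ≤ Real.logb 2 K := Real.logb_nonneg (by norm_num) hK1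
        have := mul_le_mul_of_nonneg_right hεint h0
        linarith

/-- **Lemma 9 of the paper.** For a biregular irreducible function `f`
with regularity set `M`, a channel `W : X → Z`, `ε > 0` and a (sectionwise measurable)
set `T ⊆ X × Z` with `W({z : (x,z) ∈ T}|x) > 1 − ε` for all `x`, every `m ∈ M` satisfies
`D(Q_{f,m}W ‖ P_X W | P_S) ≤ D(Q_{f,m}W_T ‖ P_X W_T | P_S) + ε·log₂(|X|/d_S)`. -/
theorem stmt_14 {S X N Z : Type*} [Fintype S] [Fintype X] [DecidableEq X] [DecidableEq N]
    [MeasurableSpace Z] (μ : Measure Z)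
    (f : S → X → N) (M : Set N) (dS dX : ℕ) (hf : IsBRI f M dS dX)
    (w : X → Z → ℝ) (hw_meas : ∀ x, Measurable (w x)) (hw0 : ∀ x z, 0 ≤ w x z)
    (hw1 : ∀ x, (∫ z, w x z ∂μ) = 1)
    (ε : ℝ) (hε : 0 < ε)
    (T : Set (X × Z)) (hTmeas : ∀ x : X, MeasurableSet {z | (x, z) ∈ T})
    (hT : ∀ x : X, 1 - ε < ∫ z in {z | (x, z) ∈ T}, w x z ∂μ)
    (m : N) (hm : m ∈ M) :
    condKL μ (unif S) (briChannelDensity f m dS w) (mixDensity (unif X) w)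
      ≤ condKL μ (unif S) (briChannelDensity f m dS (restrictChan w T))
          (mixDensity (unif X) (restrictChan w T))
        + ((ε * Real.logb 2 ((Fintype.card X : ℝ) / (dS : ℝ)) : ℝ) : EReal) := by
  classical
  by_cases hX : Nonempty X
  case neg =>
    have hXe : IsEmpty X := not_nonempty_iff.mp hX
    have hSe : IsEmpty S := by
      by_contra hS
      obtain ⟨s⟩ := not_isEmpty_iff.mp hS
      have h1 := hf.regS m hm s
      have h2 : (Finset.univ.filter fun x : X => f s x = m) = ∅ := by
        apply Finset.eq_empty_of_isEmpty
      rw [h2] at h1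
      simp at h1
      have := hf.dS_pos
      omega
    have hcard : Fintype.card X = 0 := Fintype.card_eq_zero
    have hlogb : Real.logb 2 ((Fintype.card X : ℝ) / (dS : ℝ)) = 0 := by
      rw [hcard]; norm_num
    have hLHS : condKL μ (unif S) (briChannelDensity f m dS w) (mixDensity (unif X) w) = 0 := by
      simp [condKL, Finset.univ_eq_empty]
    have hRHS : condKL μ (unif S) (briChannelDensity f m dS (restrictChan w T))
        (mixDensity (unif X) (restrictChan w T)) = 0 := by
      simp [condKL, Finset.univ_eq_empty]
    rw [hLHS, hRHS, hlogb]
    norm_num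
  case pos =>
  obtain ⟨x0⟩ := hX
  have hS : Nonempty S := by
    have h1 := hf.regX m hm x0
    have h2 : (Finset.univ.filter fun s : S => f s x0 = m).Nonempty := by
      rw [← Finset.card_pos, h1]; exact hf.dX_pos
    exact ⟨h2.choose⟩
  obtain ⟨s0⟩ := hS
  have hdS : (0:ℝ) < (dS:ℝ) := by exact_mod_cast hf.dS_pos
  have hcX : (0:ℝ) < (Fintype.card X : ℝ) := by
    exact_mod_cast Fintype.card_pos_iff.mpr ⟨x0⟩
  have hdSX : (dS:ℝ) ≤ (Fintype.card X : ℝ) := by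
    have h1 := hf.regS m hm s0
    have h2 := Finset.card_filter_le (Finset.univ : Finset X) (fun x => f s0 x = m)
    rw [h1, Finset.card_univ] at h2
    exact_mod_cast h2
  set K : ℝ := (Fintype.card X : ℝ) / (dS : ℝ) with hK_def
  have hK1 : 1 ≤ K := (one_le_div hdS).mpr hdSX
  set q : Z → ℝ := mixDensity (unif X) w with hq_def
  set qT : Z → ℝ := mixDensity (unif X) (restrictChan w T) with hqT_def
  set p : S → Z → ℝ := briChannelDensity f m dS w with hp_def
  set pT : S → Z → ℝ := briChannelDensity f m dS (restrictChan w T) with hpT_def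
  -- basic facts about w and its restriction
  have hwint : ∀ x, Integrable (w x) μ := by
    intro x
    by_contra h
    have h1 := hw1 x
    rw [integral_undef h] at h1
    norm_num at h1
  have hwT0 : ∀ x z, 0 ≤ restrictChan w T x z := by
    intro x z
    exact Set.indicator_nonneg (fun z _ => hw0 x z) z
  have hwTw : ∀ x z, restrictChan w T x z ≤ w x z := by
    intro x z
    exact Set.indicator_le_self' (fun z _ => hw0 x z) z
  have hwTmeas : ∀ x, Measurable (restrictChan w T x) :=
    fun x => (hw_meas x).indicator (hTmeas x)
  have hwTint : ∀ x, Integrable (restrictChan w T x) μ :=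
    fun x => (hwint x).indicator (hTmeas x)
  -- pointwise domination by K times the mixture
  have keyK : ∀ (w' : X → Z → ℝ), (∀ x z, 0 ≤ w' x z) → ∀ (s : S) (z : Z),
      briChannelDensity f m dS w' s z ≤ K * mixDensity (unif X) w' z := by
    intro w' h0 s z
    have h1 : briChannelDensity f m dS w' s z ≤ ∑ x : X, (1/(dS:ℝ)) * w' x z := by
      apply Finset.sum_le_sum
      intro x _
      by_cases h : f s x = m
      · rw [if_pos h]
      · rw [if_neg h, zero_mul]
        exact mul_nonneg (by positivity) (h0 x z)
    have h2 : K * mixDensity (unif X) w' z = ∑ x : X, (1/(dS:ℝ)) * w' x z := by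
      simp only [mixDensity, unif, Finset.mul_sum]
      apply Finset.sum_congr rfl
      intro x _
      rw [hK_def]
      field_simp
    linarith
  have chan0 : ∀ (w' : X → Z → ℝ), (∀ x z, 0 ≤ w' x z) → ∀ (s : S) (z : Z),
      0 ≤ briChannelDensity f m dS w' s z := by
    intro w' h0 s z
    apply Finset.sum_nonneg
    intro x _
    by_cases h : f s x = m
    · rw [if_pos h]
      exact mul_nonneg (by positivity) (h0 x z)
    · rw [if_neg h, zero_mul]
  have mix0 : ∀ (w' : X → Z → ℝ), (∀ x z, 0 ≤ w' x z) → ∀ z,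
      0 ≤ mixDensity (unif X) w' z := by
    intro w' h0 z
    apply Finset.sum_nonneg
    intro x _
    have : (0:ℝ) ≤ unif X x := by rw [unif]; positivity
    exact mul_nonneg this (h0 x z)
  -- measurability and integrability of channels and mixtures
  have chan_meas : ∀ (w' : X → Z → ℝ), (∀ x, Measurable (w' x)) → ∀ s : S,
      Measurable (briChannelDensity f m dS w' s) := by
    intro w' hmeas s
    apply Finset.measurable_sum
    intro x _
    exact (hmeas x).const_mul _
  have mix_meas : ∀ (w' : X → Z → ℝ), (∀ x, Measurable (w' x)) →
      Measurable (mixDensity (unif X) w') := by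
    intro w' hmeas
    apply Finset.measurable_sum
    intro x _
    exact (hmeas x).const_mul _
  have chan_int : ∀ (w' : X → Z → ℝ), (∀ x, Integrable (w' x) μ) → ∀ s : S,
      Integrable (briChannelDensity f m dS w' s) μ := by
    intro w' hint s
    apply integrable_finset_sum
    intro x _
    exact (hint x).const_mul _
  have mix_int : ∀ (w' : X → Z → ℝ), (∀ x, Integrable (w' x) μ) →
      Integrable (mixDensity (unif X) w') μ := by
    intro w' hint
    apply integrable_finset_sum
    intro x _
    exact (hint x).const_mul _
  have chan_integral : ∀ (w' : X → Z → ℝ), (∀ x, Integrable (w' x) μ) → ∀ s : S,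
      ∫ z, briChannelDensity f m dS w' s z ∂μ
        = ∑ x : X, (if f s x = m then 1/(dS:ℝ) else 0) * ∫ z, w' x z ∂μ := by
    intro w' hint s
    simp only [briChannelDensity]
    rw [integral_finset_sum _ (fun x _ => (hint x).const_mul _)]
    apply Finset.sum_congr rfl
    intro x _
    exact integral_const_mul _ _
  -- integral of p is 1
  have coef_sum : ∀ s : S, ∑ x : X, (if f s x = m then 1/(dS:ℝ) else 0) = 1 := by
    intro s
    rw [← Finset.sum_filter]
    rw [Finset.sum_const, hf.regS m hm s, nsmul_eq_mul]
    field_simp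
  have hint_p1 : ∀ s : S, ∫ z, p s z ∂μ = 1 := by
    intro s
    rw [hp_def, chan_integral w hwint s]
    simp only [hw1, mul_one]
    exact coef_sum s
  -- integral of pT is at least 1 - ε
  have hint_pT : ∀ s : S, 1 - ε ≤ ∫ z, pT s z ∂μ := by
    intro s
    rw [hpT_def, chan_integral (restrictChan w T) hwTint s]
    have h1 : ∀ x : X, 1 - ε ≤ ∫ z, restrictChan w T x z ∂μ := by
      intro x
      rw [restrictChan]
      rw [integral_indicator (hTmeas x)]
      exact (hT x).le
    calc (1:ℝ) - ε = ∑ x : X, (if f s x = m then 1/(dS:ℝ) else 0) * (1 - ε) := by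
          rw [← Finset.sum_mul, coef_sum s, one_mul]
      _ ≤ _ := by
          apply Finset.sum_le_sum
          intro x _
          apply mul_le_mul_of_nonneg_left (h1 x)
          by_cases h : f s x = m
          · rw [if_pos h]
            positivity
          · rw [if_neg h]
  -- subtraction facts
  have hsub_chan : ∀ s z, p s z - pT s z
      = briChannelDensity f m dS (fun x z => w x z - restrictChan w T x z) s z := by
    intro s z
    simp only [hp_def, hpT_def, briChannelDensity, ← Finset.sum_sub_distrib]
    apply Finset.sum_congr rfl
    intro x _
    ring
  have hsub_mix : ∀ z, q z - qT z
      = mixDensity (unif X) (fun x z => w x z - restrictChan w T x z) z := by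
    intro z
    simp only [hq_def, hqT_def, mixDensity, ← Finset.sum_sub_distrib]
    apply Finset.sum_congr rfl
    intro x _
    ring
  -- per-s inequality in EReal
  have per_s_ineq : ∀ s : S,
      ((unif S s : ℝ) : EReal) * klDiv2 μ (p s) q
        ≤ ((unif S s : ℝ) : EReal) * klDiv2 μ (pT s) qT
          + ((unif S s * (ε * Real.logb 2 K) : ℝ) : EReal) := by
    intro s
    have hcS0 : (0:ℝ) < unif S s := by
      rw [unif]
      have : (0:ℝ) < (Fintype.card S : ℝ) := by
        exact_mod_cast Fintype.card_pos_iff.mpr ⟨s0⟩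
      positivity
    by_cases hc : μ {z | qT z = 0 ∧ 0 < pT s z} = 0 ∧
        Integrable (fun z => pT s z * Real.logb 2 (pT s z / qT z)) μ
    · -- main case
      have hps := per_s μ (p s) (pT s) q qT K ε hK1
        (chan_meas w hw_meas s) (mix_meas w hw_meas)
        (fun z => chan0 _ hwT0 s z) (fun z => mix0 _ hwT0 z)
        (fun z => by
          simp only [hp_def, hpT_def, briChannelDensity]
          apply Finset.sum_le_sum
          intro x _
          apply mul_le_mul_of_nonneg_left (hwTw x z)
          by_cases h : f s x = m
          · rw [if_pos h]
            positivity
          · rw [if_neg h])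
        (fun z => by
          simp only [hq_def, hqT_def, mixDensity]
          apply Finset.sum_le_sum
          intro x _
          apply mul_le_mul_of_nonneg_left (hwTw x z)
          rw [unif]; positivity)
        (fun z => keyK w hw0 s z)
        (fun z => by
          rw [hsub_chan s z, hsub_mix z]
          exact keyK _ (fun x z => by linarith [hwTw x z]) s z)
        (chan_int w hwint s) (mix_int w hwint) (chan_int _ hwTint s)
        hc.1 hc.2
        (by rw [hint_p1 s]; linarith [hint_pT s])
      obtain ⟨hintL, hineq⟩ := hps
      have hnullL : μ {z | q z = 0 ∧ 0 < p s z} = 0 := by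
        have : {z | q z = 0 ∧ 0 < p s z} = ∅ := by
          ext z
          simp only [Set.mem_setOf_eq, Set.mem_empty_iff_false, iff_false, not_and]
          intro hq0
          have h1 := keyK w hw0 s z
          rw [← hq_def, hq0, mul_zero] at h1
          have h2 := chan0 w hw0 s z
          rw [← hp_def] at *
          intro h3
          linarith
        rw [this]
        exact measure_empty
      have e1 : klDiv2 μ (p s) q
          = ((∫ z, p s z * Real.logb 2 (p s z / q z) ∂μ : ℝ) : EReal) := by
        simp only [klDiv2]
        rw [if_pos ⟨hnullL, hintL⟩]
      have e2 : klDiv2 μ (pT s) qT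
          = ((∫ z, pT s z * Real.logb 2 (pT s z / qT z) ∂μ : ℝ) : EReal) := by
        simp only [klDiv2]
        rw [if_pos hc]
      rw [e1, e2]
      rw [← EReal.coe_mul, ← EReal.coe_mul, ← EReal.coe_add]
      rw [EReal.coe_le_coe_iff]
      have h4 : unif S s * (∫ z, p s z * Real.logb 2 (p s z / q z) ∂μ)
          ≤ unif S s * ((∫ z, pT s z * Real.logb 2 (pT s z / qT z) ∂μ) + ε * Real.logb 2 K) :=
        mul_le_mul_of_nonneg_left hineq hcS0.le
      linarith [h4]
    · -- degenerate case: RHS term is ⊤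
      have e2 : klDiv2 μ (pT s) qT = (⊤ : EReal) := by
        simp only [klDiv2]
        rw [if_neg hc]
      rw [e2]
      have h1 : ((unif S s : ℝ) : EReal) * (⊤ : EReal) = ⊤ :=
        EReal.coe_mul_top_of_pos hcS0
      rw [h1, EReal.top_add_coe]
      exact le_top
  -- sum up
  simp only [condKL]
  calc ∑ s : S, ((unif S s : ℝ) : EReal) * klDiv2 μ (briChannelDensity f m dS w s)
        (mixDensity (unif X) w)
      ≤ ∑ s : S, (((unif S s : ℝ) : EReal) * klDiv2 μ (pT s) qT
          + ((unif S s * (ε * Real.logb 2 K) : ℝ) : EReal)) := by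
        apply Finset.sum_le_sum
        intro s _
        exact per_s_ineq s
    _ = (∑ s : S, ((unif S s : ℝ) : EReal) * klDiv2 μ (pT s) qT)
        + ∑ s : S, ((unif S s * (ε * Real.logb 2 K) : ℝ) : EReal) := by
        rw [Finset.sum_add_distrib]
    _ = _ := by
        congr 1
        have h1 : ∑ s : S, ((unif S s * (ε * Real.logb 2 K) : ℝ) : EReal)
            = ((∑ s : S, unif S s * (ε * Real.logb 2 K) : ℝ) : EReal) := by
          rw [ereal_coe_sum]
        rw [h1]
        congr 1
        rw [← Finset.sum_mul]
        have h2 : ∑ s : S, unif S s = 1 := by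
          simp only [unif]
          rw [Finset.sum_const, nsmul_eq_mul, Finset.card_univ]
          have : (0:ℝ) < (Fintype.card S : ℝ) := by
            exact_mod_cast Fintype.card_pos_iff.mpr ⟨s0⟩
          field_simp
        rw [h2, one_mul]


end
end

section
/- Let G be a bipartite graph and s : E(G) → {−1, +1} a signing of its edges. Then the 2-lift Ĝ_{−s} of G associated to the signing −s has the same adjacency-matrix spectrum (eigenvalues with multiplicities) as the 2-lift Ĝ_s associated to s, and Ĝ_{−s} and Ĝ_s are edge-disjoint. -/
open MeasureTheory Filter
open scoped ENNReal

noncomputable section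
open Classical in
/-- The real adjacency matrix of a simple graph. -/
def adjMatR {V : Type*} [Fintype V] (G : SimpleGraph V) : Matrix V V ℝ :=
  Matrix.of fun a b => if G.Adj a b then 1 else 0


/-- The 2-lift `Ĝ_σ` of a graph `G` associated to a signing `σ` of its (potential) edges:
its vertex set consists of two copies of `V(G)`, and over each edge `{x,y}` of `G` it has
the two "parallel" edges if `σ{x,y} = 1` and the two "crossing" edges if `σ{x,y} = −1`. -/
def twoLift {V : Type*} (G : SimpleGraph V) (σ : Sym2 V → ℤ) : SimpleGraph (V × Bool) where
  Adj a b := G.Adj a.1 b.1 ∧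
    ((σ s(a.1, b.1) = 1 ∧ a.2 = b.2) ∨ (σ s(a.1, b.1) = -1 ∧ a.2 ≠ b.2))
  symm := ⟨by
    rintro ⟨x, i⟩ ⟨y, j⟩ ⟨hadj, h⟩
    refine ⟨hadj.symm, ?_⟩
    rw [Sym2.eq_swap]
    rcases h with ⟨h1, h2⟩ | ⟨h1, h2⟩
    · exact Or.inl ⟨h1, h2.symm⟩
    · exact Or.inr ⟨h1, Ne.symm h2⟩⟩
  loopless := ⟨by
    rintro ⟨x, i⟩ ⟨hadj, -⟩
    exact G.irrefl hadj⟩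

/-!
A 2-coloring `c` of `G` gives the switching `(v, i) ↦ (v, c v xor i)` of the lift. Every edge of
`G` joins two colours, so the switching exchanges parallel and crossing edges over every edge:
it is an isomorphism from the lift of `-σ` onto the lift of `σ`, hence the two adjacency matrices
are conjugate by a permutation. Edge-disjointness is immediate, since over an edge the two lifts
take opposite choices.
-/

open Classical in
theorem charpoly_adjMatR_eq_of_iso {V W : Type*} [Fintype V] [DecidableEq V] [Fintype W]
    [DecidableEq W] {G : SimpleGraph V} {H : SimpleGraph W} (e : G ≃g H) :
    (adjMatR G).charpoly = (adjMatR H).charpoly := by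
  have : Matrix.reindex e.toEquiv e.toEquiv (adjMatR G) = adjMatR H := by
    ext a b
    exact if_congr e.symm.map_adj_iff rfl rfl
  rw [← this, Matrix.charpoly_reindex]

namespace twoLift

variable {V : Type*} {G : SimpleGraph V}

theorem adj_iff {σ : Sym2 V → ℤ} {x y : V} {i j : Bool} :
    (twoLift G σ).Adj (x, i) (y, j) ↔ G.Adj x y ∧
      ((σ s(x, y) = 1 ∧ i = j) ∨ (σ s(x, y) = -1 ∧ i ≠ j)) :=
  Iff.rfl

def switch (c : V → Bool) : Equiv.Perm (V × Bool) :=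
  Function.Involutive.toPerm (fun p => (p.1, xor (c p.1) p.2)) fun p => by simp

theorem switch_apply (c : V → Bool) (x : V) (i : Bool) :
    switch c (x, i) = (x, xor (c x) i) :=
  rfl

private theorem xor_eq_xor_iff_ne {a b : Bool} (hab : a ≠ b) (i j : Bool) :
    xor a i = xor b j ↔ i ≠ j := by
  cases a <;> cases b <;> cases i <;> cases j <;> simp_all

def negIsoOfColoring (C : G.Coloring Bool) (σ : Sym2 V → ℤ) :
    twoLift G (-σ) ≃g twoLift G σ where
  toEquiv := switch C
  map_rel_iff' := by
    rintro ⟨x, i⟩ ⟨y, j⟩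
    rw [switch_apply, switch_apply, adj_iff, adj_iff]
    refine and_congr_right fun hxy => ?_
    rw [ne_eq, xor_eq_xor_iff_ne (C.valid hxy), Pi.neg_apply, neg_eq_iff_eq_neg,
      neg_eq_iff_eq_neg, neg_neg]
    tauto

theorem disjoint_edgeSet_neg (G : SimpleGraph V) (σ : Sym2 V → ℤ) :
    Disjoint (twoLift G (-σ)).edgeSet (twoLift G σ).edgeSet := by
  rw [Set.disjoint_left]
  rintro ⟨⟨x, i⟩, ⟨y, j⟩⟩ hneg hpos
  rw [SimpleGraph.mem_edgeSet, adj_iff] at hneg hpos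
  rw [Pi.neg_apply] at hneg
  grind

end twoLift

theorem stmt_15_general {V : Type*} [Fintype V] [DecidableEq V] (G : SimpleGraph V)
    (hbip : ∃ A : Set V, ∀ v w, G.Adj v w → (v ∈ A ↔ w ∉ A))
    (σ : Sym2 V → ℤ) :
    (adjMatR (twoLift G (-σ))).charpoly.roots = (adjMatR (twoLift G σ)).charpoly.roots ∧
    Disjoint (twoLift G (-σ)).edgeSet (twoLift G σ).edgeSet := by
  classical
  obtain ⟨A, hA⟩ := hbip
  let C : G.Coloring Bool := .mk (fun v => decide (v ∈ A)) fun {v w} hvw => by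
    simp [hA v w hvw]
  exact ⟨by rw [charpoly_adjMatR_eq_of_iso (twoLift.negIsoOfColoring C σ)],
    twoLift.disjoint_edgeSet_neg G σ⟩

/-- **Lemma 14 of the paper.** If `G` is a bipartite graph and `σ` a signing
of its edges (with values `±1` on edges of `G`), then the 2-lift associated to `−σ` has
the same adjacency-matrix spectrum (eigenvalues with multiplicities, i.e. the same
multiset of roots of the characteristic polynomial) as the 2-lift associated to `σ`, and
the two lifts are edge-disjoint. -/
theorem stmt_15 {V : Type*} [Fintype V] [DecidableEq V] (G : SimpleGraph V)
    (hbip : ∃ A : Set V, ∀ v w, G.Adj v w → (v ∈ A ↔ w ∉ A))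
    (σ : Sym2 V → ℤ) (hσ : ∀ e ∈ G.edgeSet, σ e = 1 ∨ σ e = -1) :
    (adjMatR (twoLift G (-σ))).charpoly.roots = (adjMatR (twoLift G σ)).charpoly.roots ∧
    Disjoint (twoLift G (-σ)).edgeSet (twoLift G σ).edgeSet :=
  stmt_15_general G hbip σ

end
end
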